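/- arXiv:1705.00133 — 3 statements merged into one kernel-verified Lean document; each statement's English description precedes it below -/
import Mathlib

section
/- (Up-to-bad, right.) Let μ₁ ∈ SubDist(A), μ₂ ∈ SubDist(B), θ ⊆ B, R ⊆ A × B. Suppose for all X ⊆ A, μ₁[X] ≤ e^ε μ₂[(θ_▷ ⟹ R)(X)] + δ, where (θ_▷ ⟹ R) = {(a,b) : b ∈ θ → (a,b) ∈ R}. Then for all X ⊆ A, μ₁[X] ≤ e^ε μ₂[R(X)] + δ + e^ε · μ₂[B∖θ]. -/
open scoped ENNReal

noncomputable section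

def mass {A : Type*} (μ : A → ℝ≥0∞) (X : Set A) : ℝ≥0∞ := ∑' x : X, μ x

def SubDist {A : Type*} (μ : A → ℝ≥0∞) : Prop := mass μ Set.univ ≤ 1

def dpDiv {B : Type*} (ε : ℝ) (μ ν : B → ℝ≥0∞) : ℝ≥0∞ :=
  ⨆ E : Set B, (mass μ E - ENNReal.ofReal (Real.exp ε) * mass ν E)

def relImage {A B : Type*} (R : A → B → Prop) (X : Set A) : Set B :=
  {b | ∃ a ∈ X, R a b}

def extL {A B : Type*} (η : A × Option B → ℝ≥0∞) : Option A × Option B → ℝ≥0∞ :=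
  fun p => p.1.elim 0 (fun a => η (a, p.2))

def extR {A B : Type*} (η : Option A × B → ℝ≥0∞) : Option A × Option B → ℝ≥0∞ :=
  fun p => p.2.elim 0 (fun b => η (p.1, b))

/-- The conditions for a pair `(ηL, ηR)` to witness an `(ε,δ)`-approximate ⋆-lifting
of `μ₁` and `μ₂` for the relation `R`.  Here `⋆` is represented by `none`. -/
def IsStarWitness {A B : Type*} (ε δ : ℝ) (μ₁ : A → ℝ≥0∞) (μ₂ : B → ℝ≥0∞)
    (R : A → B → Prop) (ηL : A × Option B → ℝ≥0∞) (ηR : Option A × B → ℝ≥0∞) : Prop :=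
  SubDist ηL ∧ SubDist ηR ∧
  (∀ a, (∑' b : Option B, ηL (a, b)) = μ₁ a) ∧
  (∀ b, (∑' a : Option A, ηR (a, b)) = μ₂ b) ∧
  (∀ a b, ηL (a, some b) ≠ 0 → R a b) ∧
  (∀ a b, ηR (some a, b) ≠ 0 → R a b) ∧
  dpDiv ε (extL ηL) (extR ηR) ≤ ENNReal.ofReal δ

/-- Existence of an `(ε,δ)`-approximate ⋆-lifting. -/
def StarLift {A B : Type*} (ε δ : ℝ) (μ₁ : A → ℝ≥0∞) (μ₂ : B → ℝ≥0∞)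
    (R : A → B → Prop) : Prop :=
  ∃ ηL ηR, IsStarWitness ε δ μ₁ μ₂ R ηL ηR

/-!
The image of `X` under `θ ⟹ R` is contained in `R(X) ∪ θᶜ`: a pair related by `θ ⟹ R`
whose right component lies in `θ` is related by `R`. Since `μ₂[·]` is monotone and
subadditive, `μ₂[(θ ⟹ R)(X)] ≤ μ₂[R(X)] + μ₂[θᶜ]`, and the hypothesis gives the claim.
-/

section Mass

variable {A : Type*} (μ : A → ℝ≥0∞)

theorem mass_mono {S T : Set A} (hST : S ⊆ T) : mass μ S ≤ mass μ T :=
  ENNReal.tsum_mono_subtype μ hST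

theorem mass_union_le (S T : Set A) : mass μ (S ∪ T) ≤ mass μ S + mass μ T :=
  ENNReal.tsum_union_le μ S T

end Mass

theorem relImage_imp_subset {A B : Type*} (θ : Set B) (R : A → B → Prop) (X : Set A) :
    relImage (fun a b => b ∈ θ → R a b) X ⊆ relImage R X ∪ θᶜ := by
  rintro b ⟨a, haX, hab⟩
  by_cases hb : b ∈ θ
  · exact Or.inl ⟨a, haX, hab hb⟩
  · exact Or.inr hb

theorem mass_relImage_imp_le {A B : Type*} (μ : B → ℝ≥0∞) (θ : Set B) (R : A → B → Prop)
    (X : Set A) :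
    mass μ (relImage (fun a b => b ∈ θ → R a b) X) ≤ mass μ (relImage R X) + mass μ θᶜ :=
  (mass_mono μ (relImage_imp_subset θ R X)).trans (mass_union_le μ _ _)

theorem up_to_bad_right_general {A B : Type*}
    (μ₁ : A → ℝ≥0∞) (μ₂ : B → ℝ≥0∞)
    (θ : Set B) (R : A → B → Prop) (ε δ : ℝ)
    (h : ∀ X : Set A,
      mass μ₁ X ≤ ENNReal.ofReal (Real.exp ε)
          * mass μ₂ (relImage (fun a b => b ∈ θ → R a b) X) + ENNReal.ofReal δ) :
    ∀ X : Set A,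
      mass μ₁ X ≤ ENNReal.ofReal (Real.exp ε) * mass μ₂ (relImage R X)
        + ENNReal.ofReal δ + ENNReal.ofReal (Real.exp ε) * mass μ₂ θᶜ := by
  intro X
  calc mass μ₁ X
      ≤ ENNReal.ofReal (Real.exp ε) * mass μ₂ (relImage (fun a b => b ∈ θ → R a b) X)
          + ENNReal.ofReal δ := h X
    _ ≤ ENNReal.ofReal (Real.exp ε) * (mass μ₂ (relImage R X) + mass μ₂ θᶜ)
          + ENNReal.ofReal δ := by gcongr; exact mass_relImage_imp_le μ₂ θ R X
    _ = _ := by ring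

theorem up_to_bad_right {A B : Type*} [Countable A] [Countable B]
    (μ₁ : A → ℝ≥0∞) (μ₂ : B → ℝ≥0∞) (h₁ : SubDist μ₁) (h₂ : SubDist μ₂)
    (θ : Set B) (R : A → B → Prop) (ε δ : ℝ) (hε : 0 ≤ ε) (hδ : 0 ≤ δ)
    (h : ∀ X : Set A,
      mass μ₁ X ≤ ENNReal.ofReal (Real.exp ε)
          * mass μ₂ (relImage (fun a b => b ∈ θ → R a b) X) + ENNReal.ofReal δ) :
    ∀ X : Set A,
      mass μ₁ X ≤ ENNReal.ofReal (Real.exp ε) * mass μ₂ (relImage R X)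
        + ENNReal.ofReal δ + ENNReal.ofReal (Real.exp ε) * mass μ₂ θᶜ :=
  up_to_bad_right_general μ₁ μ₂ θ R ε δ h
end
end

section
/- (Optimal subset coupling as corollary.) Let μ ∈ SubDist(A) and P₂ ⊆ P₁ ⊆ A. Then μ[P₁] ≤ e^ε · μ[P₂] if and only if for all X ⊆ A, μ[X] ≤ e^ε · μ[R(X)], where R = {(a₁,a₂) : a₁ ∈ P₁ ↔ a₂ ∈ P₂}. -/
open scoped ENNReal

noncomputable section

/-!
If `X ⊆ P₁` is nonempty, then `R(X) ⊇ P₂`, so `μ[X] ≤ μ[P₁] ≤ e^ε μ[P₂] ≤ e^ε μ[R(X)]`.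
If some `a ∈ X` lies outside `P₁`, then `X ⊆ R(X)` (points of `P₁ ∖ P₂` are reached from `a`,
all others from themselves), and `e^ε ≥ 1` suffices. Conversely, `R(P₁) ⊆ P₂`.
-/

@[gcongr]
lemma mass_mono_s11 {A : Type*} (μ : A → ℝ≥0∞) {X Y : Set A} (h : X ⊆ Y) :
    mass μ X ≤ mass μ Y :=
  ENNReal.tsum_mono_subtype μ h

@[simp]
lemma mass_empty {A : Type*} (μ : A → ℝ≥0∞) : mass μ ∅ = 0 := by
  simp [mass]

section SubsetRelation

variable {A : Type*} {P₁ P₂ X : Set A}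

lemma subset_relImage_of_mem {a : A} (ha : a ∈ X) (haP : a ∈ P₁) :
    P₂ ⊆ relImage (fun a₁ a₂ => a₁ ∈ P₁ ↔ a₂ ∈ P₂) X :=
  fun _ hb => ⟨a, ha, iff_of_true haP hb⟩

lemma subset_relImage_self_of_not_subset (hP : P₂ ⊆ P₁) (hX : ¬ X ⊆ P₁) :
    X ⊆ relImage (fun a₁ a₂ => a₁ ∈ P₁ ↔ a₂ ∈ P₂) X := by
  obtain ⟨a, ha, haP⟩ := Set.not_subset.mp hX
  intro x hx
  by_cases hx₂ : x ∈ P₂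
  · exact ⟨x, hx, iff_of_true (hP hx₂) hx₂⟩
  · exact ⟨a, ha, iff_of_false haP hx₂⟩

lemma relImage_subset_of_subset (hX : X ⊆ P₁) :
    relImage (fun a₁ a₂ => a₁ ∈ P₁ ↔ a₂ ∈ P₂) X ⊆ P₂ := by
  rintro b ⟨a, ha, hab⟩
  exact hab.mp (hX ha)

end SubsetRelation

theorem optimal_subset_coupling_general {A : Type*}
    (μ : A → ℝ≥0∞) (P₁ P₂ : Set A) (hP : P₂ ⊆ P₁)
    (ε : ℝ) (hε : 0 ≤ ε) :
    mass μ P₁ ≤ ENNReal.ofReal (Real.exp ε) * mass μ P₂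
    ↔ (∀ X : Set A,
        mass μ X ≤ ENNReal.ofReal (Real.exp ε)
          * mass μ (relImage (fun a₁ a₂ => a₁ ∈ P₁ ↔ a₂ ∈ P₂) X)) := by
  constructor
  · intro h X
    by_cases hX : X ⊆ P₁
    · rcases X.eq_empty_or_nonempty with rfl | ⟨a, ha⟩
      · simp
      calc mass μ X ≤ mass μ P₁ := mass_mono_s11 μ hX
        _ ≤ ENNReal.ofReal (Real.exp ε) * mass μ P₂ := h
        _ ≤ _ := by gcongr; exact subset_relImage_of_mem ha (hX ha)
    · have one_le_exp : (1 : ℝ≥0∞) ≤ ENNReal.ofReal (Real.exp ε) :=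
        ENNReal.one_le_ofReal.mpr (Real.one_le_exp hε)
      exact (mass_mono_s11 μ (subset_relImage_self_of_not_subset hP hX)).trans
        (le_mul_of_one_le_left zero_le one_le_exp)
  · intro h
    exact (h P₁).trans (by gcongr; exact relImage_subset_of_subset subset_rfl)

theorem optimal_subset_coupling {A : Type*}
    (μ : A → ℝ≥0∞) (hμ : SubDist μ) (P₁ P₂ : Set A) (hP : P₂ ⊆ P₁)
    (ε : ℝ) (hε : 0 ≤ ε) :
    mass μ P₁ ≤ ENNReal.ofReal (Real.exp ε) * mass μ P₂
    ↔ (∀ X : Set A,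
        mass μ X ≤ ENNReal.ofReal (Real.exp ε)
          * mass μ (relImage (fun a₁ a₂ => a₁ ∈ P₁ ↔ a₂ ∈ P₂) X)) :=
  optimal_subset_coupling_general μ P₁ P₂ hP ε hε
end
end

section
/- (⋆-liftings generalize 2-liftings.) If (μ_L, μ_R) is an (ε,δ)-approximate 2-lifting of μ₁ ∈ SubDist(A) and μ₂ ∈ SubDist(B) for R ⊆ A × B (witnesses over A × B with π₁(μ_L)=μ₁, π₂(μ_R)=μ₂, supp(μ_L), supp(μ_R) ⊆ R, Δ_ε(μ_L,μ_R) ≤ δ), then there exists an (ε,δ)-approximate ⋆-lifting of μ₁ and μ₂ for R. Moreover, the converse fails: there exist μ, ε, and relations R for which an (ε,0)-⋆-lifting exists but no (ε,0)-2-lifting exists. -/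
open scoped ENNReal

noncomputable section

/-- Witness conditions for an `(ε,δ)`-approximate 2-lifting. -/
def IsTwoWitness {A B : Type*} (ε δ : ℝ) (μ₁ : A → ℝ≥0∞) (μ₂ : B → ℝ≥0∞)
    (R : A → B → Prop) (μL μR : A × B → ℝ≥0∞) : Prop :=
  SubDist μL ∧ SubDist μR ∧
  (∀ a, (∑' b : B, μL (a, b)) = μ₁ a) ∧
  (∀ b, (∑' a : A, μR (a, b)) = μ₂ b) ∧
  (∀ a b, μL (a, b) ≠ 0 → R a b) ∧
  (∀ a b, μR (a, b) ≠ 0 → R a b) ∧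
  dpDiv ε μL μR ≤ ENNReal.ofReal δ

/-- Existence of an `(ε,δ)`-approximate 2-lifting. -/
def TwoLift {A B : Type*} (ε δ : ℝ) (μ₁ : A → ℝ≥0∞) (μ₂ : B → ℝ≥0∞)
    (R : A → B → Prop) : Prop :=
  ∃ μL μR, IsTwoWitness ε δ μ₁ μ₂ R μL μR

/-!
A 2-lifting is a ⋆-lifting that puts no mass on `⋆`. After zero-extension to `A⋆ × B⋆` both
witnesses are extensions by zero along the injection `A × B → A⋆ × B⋆`, and every event of
`A × B` is the preimage of its image, so `Δ_ε` does not change.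

Conversely, take `μ` uniform on `Bool` and `R a b ↔ b = true`. A 2-lifting must put the mass
`μ false` of the right marginal into the column `b = false`, which lies outside `R`. A ⋆-lifting
can park it at `(⋆, false)`, where it only enlarges the right witness and so costs nothing in
`Δ_ε`; the price `e^ε = 2` comes from splitting the column `b = true` between both rows.
-/
open Function

theorem ENNReal.tsum_option {β : Type*} (f : Option β → ℝ≥0∞) :
    ∑' o, f o = f none + ∑' b, f (some b) := by
  rw [← (Equiv.optionEquivSumPUnit.{0} β).symm.tsum_eq, ENNReal.summable.tsum_sum ENNReal.summable,
    add_comm]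
  simp [tsum_fintype]

section Mass

variable {α β : Type*}

lemma mass_univ (μ : α → ℝ≥0∞) : mass μ Set.univ = ∑' a, μ a :=
  tsum_univ μ

lemma mass_univ_eq_of_rowSums {η : α × β → ℝ≥0∞} {μ : α → ℝ≥0∞}
    (h : ∀ a, ∑' b, η (a, b) = μ a) : mass η Set.univ = mass μ Set.univ := by
  rw [mass_univ, mass_univ, ENNReal.tsum_prod', tsum_congr h]

lemma mass_univ_eq_of_colSums {η : α × β → ℝ≥0∞} {μ : β → ℝ≥0∞}
    (h : ∀ b, ∑' a, η (a, b) = μ b) : mass η Set.univ = mass μ Set.univ := by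
  rw [mass_univ, mass_univ, ENNReal.tsum_prod', ENNReal.tsum_comm, tsum_congr h]

lemma mass_extend_zero {j : α → β} (hj : Injective j) (μ : α → ℝ≥0∞) (E : Set β) :
    mass (extend j μ 0) E = mass μ (j ⁻¹' E) := by
  rw [mass, mass, ← tsum_extend_zero (hj.restrictPreimage E)]
  refine tsum_congr fun ⟨y, hy⟩ => ?_
  by_cases hrange : ∃ x, j x = y
  · obtain ⟨x, rfl⟩ := hrange
    rw [hj.extend_apply]
    exact ((hj.restrictPreimage E).extend_apply (fun x : j ⁻¹' E => μ x) 0 ⟨x, hy⟩).symm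
  · rw [extend_apply' _ _ _ hrange, extend_apply' _ _ _ ?_]
    · rfl
    rintro ⟨x, hx⟩
    exact hrange ⟨x, congrArg Subtype.val hx⟩

lemma dpDiv_extend_zero {j : α → β} (hj : Injective j) (ε : ℝ) (μ ν : α → ℝ≥0∞) :
    dpDiv ε (extend j μ 0) (extend j ν 0) = dpDiv ε μ ν := by
  refine le_antisymm (iSup_le fun E => ?_) (iSup_le fun F => ?_)
  · rw [mass_extend_zero hj, mass_extend_zero hj]
    exact le_iSup (fun F => mass μ F - _ * mass ν F) (j ⁻¹' E)
  · rw [← Set.preimage_image_eq F hj, ← mass_extend_zero hj, ← mass_extend_zero hj]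
    exact le_iSup (fun E => mass (extend j μ 0) E - _ * mass (extend j ν 0) E) (j '' F)

lemma dpDiv_eq_zero_of_le_mul {ε : ℝ} {μ ν : α → ℝ≥0∞}
    (h : ∀ x, μ x ≤ ENNReal.ofReal (Real.exp ε) * ν x) : dpDiv ε μ ν = 0 :=
  ENNReal.iSup_eq_zero.mpr fun E => tsub_eq_zero_of_le <|
    (ENNReal.tsum_le_tsum fun x : E => h x).trans_eq ENNReal.tsum_mul_left

end Mass

section TwoToStar

variable {A B : Type*}

def liftL (μ : A × B → ℝ≥0∞) : A × Option B → ℝ≥0∞ :=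
  fun p => p.2.elim 0 fun b => μ (p.1, b)

def liftR (μ : A × B → ℝ≥0∞) : Option A × B → ℝ≥0∞ :=
  fun p => p.1.elim 0 fun a => μ (a, p.2)

lemma tsum_liftL (μ : A × B → ℝ≥0∞) (a : A) :
    ∑' ob, liftL μ (a, ob) = ∑' b, μ (a, b) := by
  rw [ENNReal.tsum_option]
  exact zero_add _

lemma tsum_liftR (μ : A × B → ℝ≥0∞) (b : B) :
    ∑' oa, liftR μ (oa, b) = ∑' a, μ (a, b) := by
  rw [ENNReal.tsum_option]
  exact zero_add _

lemma mass_univ_liftL (μ : A × B → ℝ≥0∞) : mass (liftL μ) Set.univ = mass μ Set.univ := by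
  rw [mass_univ_eq_of_rowSums (tsum_liftL μ), ← mass_univ_eq_of_rowSums fun _ => rfl]

lemma mass_univ_liftR (μ : A × B → ℝ≥0∞) : mass (liftR μ) Set.univ = mass μ Set.univ := by
  rw [mass_univ_eq_of_colSums (tsum_liftR μ), ← mass_univ_eq_of_colSums fun _ => rfl]

lemma extend_prodMap_some_some (μ : A × B → ℝ≥0∞) :
    extend (Prod.map some some) μ 0 =
      fun p => p.1.elim 0 fun a => p.2.elim 0 fun b => μ (a, b) := by
  ext ⟨_ | a, _ | b⟩
  case some.some =>
    exact ((Option.some_injective A).prodMap (Option.some_injective B)).extend_apply μ 0 (a, b)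
  all_goals exact extend_apply' _ _ _ (by simp)

lemma extL_liftL (μ : A × B → ℝ≥0∞) : extL (liftL μ) = extend (Prod.map some some) μ 0 := by
  rw [extend_prodMap_some_some]
  rfl

lemma extR_liftR (μ : A × B → ℝ≥0∞) : extR (liftR μ) = extend (Prod.map some some) μ 0 := by
  rw [extend_prodMap_some_some]
  ext ⟨_ | a, _ | b⟩ <;> rfl

theorem IsTwoWitness.isStarWitness {ε δ : ℝ} {μ₁ : A → ℝ≥0∞} {μ₂ : B → ℝ≥0∞}
    {R : A → B → Prop} {μL μR : A × B → ℝ≥0∞} (h : IsTwoWitness ε δ μ₁ μ₂ R μL μR) :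
    IsStarWitness ε δ μ₁ μ₂ R (liftL μL) (liftR μR) := by
  obtain ⟨hL, hR, hmargL, hmargR, hsuppL, hsuppR, hdist⟩ := h
  refine ⟨(mass_univ_liftL μL).trans_le hL, (mass_univ_liftR μR).trans_le hR,
    fun a => (tsum_liftL μL a).trans (hmargL a), fun b => (tsum_liftR μR b).trans (hmargR b),
    hsuppL, hsuppR, ?_⟩
  have hj : Injective (Prod.map (some : A → Option A) (some : B → Option B)) :=
    (Option.some_injective A).prodMap (Option.some_injective B)
  rwa [extL_liftL, extR_liftR, dpDiv_extend_zero hj]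

theorem TwoLift.starLift {ε δ : ℝ} {μ₁ : A → ℝ≥0∞} {μ₂ : B → ℝ≥0∞} {R : A → B → Prop}
    (h : TwoLift ε δ μ₁ μ₂ R) : StarLift ε δ μ₁ μ₂ R :=
  let ⟨_, _, hw⟩ := h
  ⟨_, _, hw.isStarWitness⟩

end TwoToStar

theorem not_twoLift_of_forall_not_rel {A B : Type*} {ε δ : ℝ} {μ₁ : A → ℝ≥0∞}
    {μ₂ : B → ℝ≥0∞} {R : A → B → Prop} {b : B} (hb : μ₂ b ≠ 0) (hR : ∀ a, ¬ R a b) :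
    ¬ TwoLift ε δ μ₁ μ₂ R := by
  rintro ⟨-, μR, -, -, -, hmargR, -, hsuppR, -⟩
  have hcol : ∀ a, μR (a, b) = 0 := fun a => by_contra fun hne => hR a (hsuppR a b hne)
  rw [← hmargR b, tsum_congr hcol, tsum_zero] at hb
  exact hb rfl

def uniformStarL : Bool × Option Bool → ℝ≥0∞ :=
  fun p => if p.2 = some true then 2⁻¹ else 0

def uniformStarR : Option Bool × Bool → ℝ≥0∞ :=
  fun p => if p.2 then p.1.elim 0 fun _ => 4⁻¹ else p.1.elim 2⁻¹ fun _ => 0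

lemma ENNReal.two_mul_inv_four : (2 : ℝ≥0∞) * 4⁻¹ = 2⁻¹ := by
  rw [show (4 : ℝ≥0∞) = 2 * 2 by norm_num, ENNReal.mul_inv (by simp) (by simp), ← mul_assoc,
    ENNReal.mul_inv_cancel (by simp) (by simp), one_mul]

lemma subDist_uniform_bool : SubDist fun _ : Bool => (2⁻¹ : ℝ≥0∞) := by
  rw [SubDist, mass_univ, tsum_bool, ENNReal.inv_two_add_inv_two]

theorem isStarWitness_uniformStar :
    IsStarWitness (Real.log 2) 0 (fun _ => 2⁻¹) (fun _ => 2⁻¹) (fun _ b => b = true)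
      uniformStarL uniformStarR := by
  have hrow : ∀ a, ∑' ob, uniformStarL (a, ob) = 2⁻¹ := fun a => by
    simp [uniformStarL]
  have hcol : ∀ b, ∑' oa, uniformStarR (oa, b) = 2⁻¹ := fun b => by
    cases b <;> simp [uniformStarR, ← two_mul, ENNReal.two_mul_inv_four]
  have hdom : ∀ x, extL uniformStarL x ≤
      ENNReal.ofReal (Real.exp (Real.log 2)) * extR uniformStarR x := by
    rintro ⟨_ | a, _ | _ | _⟩ <;>
      simp [extL, extR, uniformStarL, uniformStarR, Real.exp_log, ENNReal.two_mul_inv_four]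
  refine ⟨?_, ?_, hrow, hcol, ?_, ?_, ?_⟩
  · exact (mass_univ_eq_of_rowSums hrow).trans_le subDist_uniform_bool
  · exact (mass_univ_eq_of_colSums hcol).trans_le subDist_uniform_bool
  · rintro a (_ | _) h
    · simp [uniformStarL] at h
    · rfl
  · rintro a (_ | _) h
    · simp [uniformStarR] at h
    · rfl
  · exact (dpDiv_eq_zero_of_le_mul hdom).trans_le bot_le

theorem twoLift_subset_starLift_and_strict :
    (∀ {A B : Type} (μ₁ : A → ℝ≥0∞) (μ₂ : B → ℝ≥0∞) (R : A → B → Prop) (ε δ : ℝ),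
      0 ≤ ε → 0 ≤ δ → SubDist μ₁ → SubDist μ₂ →
      TwoLift ε δ μ₁ μ₂ R → StarLift ε δ μ₁ μ₂ R) ∧
    (∃ (A : Type) (μ : A → ℝ≥0∞) (R : A → A → Prop) (ε : ℝ),
      0 ≤ ε ∧ SubDist μ ∧ StarLift ε 0 μ μ R ∧ ¬ TwoLift ε 0 μ μ R) :=
  ⟨fun _ _ _ _ _ _ _ _ _ h => h.starLift,
    ⟨Bool, fun _ => 2⁻¹, fun _ b => b = true, Real.log 2, Real.log_nonneg one_le_two,
      subDist_uniform_bool, ⟨_, _, isStarWitness_uniformStar⟩,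
      not_twoLift_of_forall_not_rel (b := false) (by simp) (by simp)⟩⟩
end
end
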